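/- arXiv:1611.10203 — 3 statements merged into one kernel-verified Lean document; each statement's English description precedes it below -/
import Mathlib

section
/- Let g : ℝ → ℝ be differentiable with |g'(t)| ≤ c·e^{−|t|} for all t ∈ ℝ and some c > 0. Define l(x) = c·exp(−|x|/2 + 1/2) and r(x) = (1 + |x|)/2 for x ∈ ℝ. Then |g(x − h) − g(x)| ≤ l(x)|h| whenever |h| ≤ r(x), for all x ∈ ℝ, and ∫ (l(x) + r(x)^{−δ}) dx < ∞ for every δ > 1; hence g ∈ Lip(1, δ) for every δ > 1. -/
open MeasureTheory Filter

/-- Scaled kernel `(S_h K)(x) = (1/h) K(x/h)`. -/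
noncomputable def Sker (h : ℝ) (K : ℝ → ℝ) : ℝ → ℝ := fun x => (1 / h) * K (x / h)

/-- Convolution `(f ∗ g)(x) = ∫ g(y) f(x − y) dy`. -/
noncomputable def conv (f g : ℝ → ℝ) : ℝ → ℝ := fun x => ∫ y, g y * f (x - y)

/-- `L¹` norm `‖g‖₁ = ∫ |g|`. -/
noncomputable def L1norm (g : ℝ → ℝ) : ℝ := ∫ x, |g x|

/-- Moment `α_j(K) = ∫ t^j K(t) dt`. -/
noncomputable def alphaM (j : ℕ) (K : ℝ → ℝ) : ℝ := ∫ t, t ^ j * K t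

/-- Absolute moment `β_r(K) = ∫ |t|^r |K(t)| dt` (real exponent). -/
noncomputable def betaM (r : ℝ) (K : ℝ → ℝ) : ℝ := ∫ t, |t| ^ r * |K t|

/-- A kernel: integrable with total integral one. -/
def IsKernel (K : ℝ → ℝ) : Prop := Integrable K ∧ ∫ x, K x = 1

/-- A kernel of order `s`: `α_j(K) = 0` for `1 ≤ j < s` and `α_s(K) ≠ 0`. -/
def IsKernelOfOrder (s : ℕ) (K : ℝ → ℝ) : Prop :=
  IsKernel K ∧ (∀ j, 1 ≤ j → j < s → alphaM j K = 0) ∧ alphaM s K ≠ 0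

/-- `f` is `s`-smooth with `s`-th derivative `fs`: `f` is `(s−1)`-times differentiable,
`f^{(s−1)}` is absolutely continuous with a.e. derivative `fs`, and `fs ∈ L¹`. -/
def SSmooth (s : ℕ) (f fs : ℝ → ℝ) : Prop :=
  (∀ k, k < s - 1 → Differentiable ℝ (iteratedDeriv k f)) ∧
  (∀ a b : ℝ, a ≤ b →
    iteratedDeriv (s - 1) f b - iteratedDeriv (s - 1) f a = ∫ x in a..b, fs x) ∧
  Integrable fs

/-- `L¹` continuity modulus `ω(δ) = sup_{|t| ≤ δ} ∫ |g(x − t) − g(x)| dx`. -/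
noncomputable def omegaMod (g : ℝ → ℝ) (δ : ℝ) : ℝ :=
  ⨆ t : {t : ℝ // |t| ≤ δ}, ∫ x, |g (x - (t : ℝ)) - g x|

/-- Uniform integrability of a sequence of functions on `ℝ`. -/
def UnifIntegrableSeq (g : ℕ → ℝ → ℝ) : Prop :=
  (∀ n, Integrable (g n)) ∧
  (∃ C, ∀ n, (∫ t, |g n t|) ≤ C) ∧
  (∀ ε : ℝ, 0 < ε → ∃ T : ℝ, ∀ n, (∫ t in {t : ℝ | T < |t|}, |g n t|) < ε)

/-- Membership in the class `Lip(a, δ)` with positive Lipschitz constant and radius. -/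
def MemLipPos (a δ : ℝ) (g : ℝ → ℝ) : Prop :=
  ∃ l r : ℝ → ℝ, (∀ x, 0 < l x) ∧ (∀ x, 0 < r x) ∧
    (∀ x u : ℝ, |u| ≤ r x → |g (x - u) - g x| ≤ l x * |u| ^ a) ∧
    Integrable (fun x => l x + (r x) ^ (-δ))

open Set in
lemma integrable_exp_neg_mul_abs' {b : ℝ} (hb : 0 < b) :
    Integrable (fun x : ℝ => Real.exp (-b * |x|)) := by
  have h1 : IntegrableOn (fun x : ℝ => Real.exp (-b * |x|)) (Ioi 0) := by
    refine (exp_neg_integrableOn_Ioi 0 hb).congr_fun ?_ measurableSet_Ioi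
    intro x hx; simp only [abs_of_pos (show (0:ℝ) < x from hx)]
  have hind : Integrable ((Set.Ioi (0:ℝ)).indicator fun x => Real.exp (-b * |x|)) :=
    (integrable_indicator_iff measurableSet_Ioi).2 h1
  have h2 := hind.comp_neg
  have h2' : (fun x => ((Set.Ioi (0:ℝ)).indicator fun x => Real.exp (-b * |x|)) (-x))
      = (Set.Iio (0:ℝ)).indicator fun x => Real.exp (-b * |x|) := by
    funext x
    by_cases hx : x < 0 <;> simp_all [Set.indicator, not_lt, neg_pos, abs_neg]
  rw [h2'] at h2
  have h3 : IntegrableOn (fun x : ℝ => Real.exp (-b * |x|)) (Iio 0) :=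
    (integrable_indicator_iff measurableSet_Iio).1 h2
  rw [← integrableOn_univ, ← Set.Iio_union_Ici (a := (0:ℝ))]
  exact h3.union ((integrableOn_Ici_iff_integrableOn_Ioi).2 h1)

/-- Lemma 1(b): if `|g'(t)| ≤ c e^{−|t|}`, then with
`l(x) = c e^{−|x|/2 + 1/2}` and `r(x) = (1 + |x|)/2` the local Lipschitz bound holds,
`∫ (l + r^{−δ}) < ∞` for every `δ > 1`, and hence `g ∈ Lip(1, δ)` for every `δ > 1`. -/
theorem lipClass_of_exponential_decay
    (c : ℝ) (hc : 0 < c) (g : ℝ → ℝ) (hg : Differentiable ℝ g)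
    (hg' : ∀ t : ℝ, |deriv g t| ≤ c * Real.exp (-|t|)) :
    (∀ x u : ℝ, |u| ≤ (1 + |x|) / 2 →
        |g (x - u) - g x| ≤ c * Real.exp (-|x| / 2 + 1 / 2) * |u|) ∧
    (∀ δ : ℝ, 1 < δ →
        Integrable (fun x => c * Real.exp (-|x| / 2 + 1 / 2) + ((1 + |x|) / 2) ^ (-δ))) ∧
    (∀ δ : ℝ, 1 < δ → MemLipPos 1 δ g) := by
  have hlip : ∀ x u : ℝ, |u| ≤ (1 + |x|) / 2 →
      |g (x - u) - g x| ≤ c * Real.exp (-|x| / 2 + 1 / 2) * |u| := by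
    intro x u hu
    have hr0 : (0:ℝ) ≤ (1 + |x|) / 2 := by positivity
    have hxmem : x ∈ Metric.closedBall x ((1 + |x|) / 2) := Metric.mem_closedBall_self hr0
    have hymem : x - u ∈ Metric.closedBall x ((1 + |x|) / 2) := by
      simp only [Metric.mem_closedBall, Real.dist_eq]
      calc |x - u - x| = |u| := by rw [show x - u - x = -u by ring, abs_neg]
        _ ≤ (1 + |x|) / 2 := hu
    have hbound : ∀ t ∈ Metric.closedBall x ((1 + |x|) / 2),
        ‖deriv g t‖ ≤ c * Real.exp (-|x| / 2 + 1 / 2) := by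
      intro t ht
      simp only [Metric.mem_closedBall, Real.dist_eq] at ht
      have h1 : |x| - (1 + |x|) / 2 ≤ |t| := by
        have := abs_sub_abs_le_abs_sub x t
        have h2 : |x - t| ≤ (1 + |x|) / 2 := by rwa [abs_sub_comm] at ht
        linarith
      have h3 : Real.exp (-|t|) ≤ Real.exp (-|x| / 2 + 1 / 2) :=
        Real.exp_le_exp.2 (by linarith)
      calc ‖deriv g t‖ = |deriv g t| := rfl
        _ ≤ c * Real.exp (-|t|) := hg' t
        _ ≤ c * Real.exp (-|x| / 2 + 1 / 2) := by
            exact mul_le_mul_of_nonneg_left h3 hc.le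
    have := (convex_closedBall x ((1 + |x|) / 2)).norm_image_sub_le_of_norm_deriv_le
      (fun t _ => hg.differentiableAt) hbound hxmem hymem
    calc |g (x - u) - g x| = ‖g (x - u) - g x‖ := rfl
      _ ≤ c * Real.exp (-|x| / 2 + 1 / 2) * ‖x - u - x‖ := this
      _ = c * Real.exp (-|x| / 2 + 1 / 2) * |u| := by
          rw [show x - u - x = -u by ring]; simp [Real.norm_eq_abs]
  have hint : ∀ δ : ℝ, 1 < δ →
      Integrable (fun x => c * Real.exp (-|x| / 2 + 1 / 2) + ((1 + |x|) / 2) ^ (-δ)) := by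
    intro δ hδ
    have h1 : Integrable (fun x : ℝ => c * Real.exp (-|x| / 2 + 1 / 2)) := by
      have h := (integrable_exp_neg_mul_abs' (b := 1/2) (by norm_num)).const_mul
        (c * Real.exp (1/2))
      have he : (fun x : ℝ => c * Real.exp (-|x| / 2 + 1 / 2))
          = fun x : ℝ => (c * Real.exp (1/2)) * Real.exp (-(1/2) * |x|) := by
        funext x
        rw [Real.exp_add]
        ring_nf
      rw [he]; exact h
    have h2 : Integrable (fun x : ℝ => ((1 + |x|) / 2) ^ (-δ)) := by
      have hnorm : Integrable (fun x : ℝ => (1 + ‖x‖) ^ (-δ)) :=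
        integrable_one_add_norm (E := ℝ) (by simpa using hδ)
      have he : (fun x : ℝ => ((1 + |x|) / 2) ^ (-δ))
          = fun x : ℝ => (1 + ‖x‖) ^ (-δ) / (2:ℝ) ^ (-δ) := by
        funext x
        rw [Real.div_rpow (by positivity) (by norm_num), Real.norm_eq_abs]
      rw [he]; exact hnorm.div_const _
    exact h1.add h2
  refine ⟨hlip, hint, fun δ hδ => ?_⟩
  refine ⟨fun x => c * Real.exp (-|x| / 2 + 1 / 2), fun x => (1 + |x|) / 2,
    fun x => by positivity, fun x => by positivity, fun x u hu => ?_, hint δ hδ⟩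
  rw [Real.rpow_one]
  exact hlip x u hu
end

section
/- Let s ≥ 1 be an integer, h > 0, and let K : ℝ → ℝ be a kernel with α_j(K) = 0 for j = 1,…,s−1 and β_s(K) < ∞. Let f : ℝ → ℝ be s-smooth and integrable. Then for almost every x ∈ ℝ, (f ∗ S_h K)(x) − f(x) = ((−h)^s / s!) · ∫ [ ∫₀¹ f^{(s)}(x − hλt) · s(1−λ)^{s−1} dλ ] · t^s K(t) dt. -/
/-
Substituting `y = h t` turns the convolution into `∫ K(t) f(x - h t) dt`. As a primitive of the
integrable `f^{(s)}`, `f^{(s-1)}` is absolutely continuous, so Taylor's formula with integral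
remainder (rescaled to `[0, 1]`) expands `f(x - h t)` around `x`. Integrating against `K`, the
vanishing moments reduce the Taylor polynomial to `f(x)`, and only the remainder survives. The
splitting of the integral is legitimate because `β_s(K) < ∞` makes all moments up to `s` finite
and, for almost every `x`, `K(t) f(x - h t)` is integrable (an `L¹` convolution exists a.e.).
-/

open MeasureTheory Filter

open Set Finset Nat Topology

theorem AbsolutelyContinuousOnInterval.congr {X : Type*} [PseudoMetricSpace X] {f g : ℝ → X}
    {a b : ℝ} (hf : AbsolutelyContinuousOnInterval f a b) (hfg : EqOn f g (uIcc a b)) :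
    AbsolutelyContinuousOnInterval g a b :=
  hf.congr' <| eventually_inf_principal.2 <| Eventually.of_forall fun E hE =>
    Finset.sum_congr rfl fun i hi => by rw [hfg (hE.1 i hi).1, hfg (hE.1 i hi).2]

theorem taylor_integral_remainder_of_iteratedDeriv_sub_eq_integral {f g : ℝ → ℝ} {n : ℕ}
    (hf : ContDiff ℝ n f) (hg : LocallyIntegrable g)
    (hrep : ∀ a b, iteratedDeriv n f b - iteratedDeriv n f a = ∫ t in a..b, g t) (x₀ x : ℝ) :
    f x = ∑ k ∈ range (n + 1), iteratedDeriv k f x₀ * (x - x₀) ^ k / k ! +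
      ∫ t in x₀..x, (x - t) ^ n / n ! * g t := by
  rcases eq_or_ne x₀ x with rfl | hne
  · simp [Finset.sum_range_succ']
  set I := uIcc x₀ x
  have hI : UniqueDiffOn ℝ I := uniqueDiffOn_uIcc hne
  -- Mathlib's Taylor theorem works with derivatives within `I`: up to order `n` they are the
  -- global ones, and at order `n + 1` they agree with `g` almost everywhere.
  have hwithin : ∀ k ≤ n, EqOn (iteratedDerivWithin k f I) (iteratedDeriv k f) I :=
    fun k hk y hy =>
      iteratedDerivWithin_eq_iteratedDeriv hI (hf.contDiffAt.of_le (by exact_mod_cast hk)) hy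
  have hprim : iteratedDeriv n f = fun y => iteratedDeriv n f x₀ + ∫ t in x₀..y, g t :=
    funext fun y => by linarith [hrep x₀ y]
  have hAC : AbsolutelyContinuousOnInterval (iteratedDerivWithin n f I) x₀ x := by
    refine AbsolutelyContinuousOnInterval.congr ?_ (hwithin n le_rfl).symm
    rw [hprim]
    exact contDiffOn_const.absolutelyContinuousOnInterval.add <|
      (hg.integrableOn_isCompact isCompact_uIcc).intervalIntegrable
        |>.absolutelyContinuousOnInterval_intervalIntegral left_mem_uIcc
  have hderiv : ∀ᵐ t, t ∈ uIoc x₀ x → iteratedDerivWithin (n + 1) f I t = g t := by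
    filter_upwards [LocallyIntegrable.ae_hasDerivAt_integral hg, Measure.ae_ne volume x₀,
      Measure.ae_ne volume x] with t ht htx₀ htx hmem
    have hnhds : I ∈ 𝓝 t := Icc_mem_nhds hmem.1 <| hmem.2.lt_of_ne <| by
      rcases max_choice x₀ x with h | h <;> rw [h] <;> assumption
    rw [iteratedDerivWithin_succ, derivWithin_of_mem_nhds hnhds,
      ((hwithin n le_rfl).eventuallyEq_of_mem hnhds).deriv_eq, hprim]
    exact ((hasDerivAt_const t _).add (ht x₀)).deriv.trans (zero_add _)
  have key := taylor_integral_remainder_of_absolutelyContinuous hf.contDiffOn hAC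
  rw [taylor_within_apply,
    intervalIntegral.integral_congr_ae (hderiv.mono fun t ht hmem => by rw [ht hmem])] at key
  have hcoeff : ∀ k ∈ range (n + 1),
      ((k ! : ℝ)⁻¹ * (x - x₀) ^ k) • iteratedDerivWithin k f I x₀ =
        iteratedDeriv k f x₀ * (x - x₀) ^ k / k ! := fun k hk => by
    rw [hwithin k (Nat.lt_succ_iff.1 (mem_range.1 hk)) left_mem_uIcc, smul_eq_mul]
    ring
  rw [Finset.sum_congr rfl hcoeff] at key
  linarith

theorem integral_sub_pow_mul_eq_unitInterval (g : ℝ → ℝ) (n : ℕ) (x c : ℝ) :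
    ∫ t in x..x + c, (x + c - t) ^ n / n ! * g t =
      c ^ (n + 1) / (n + 1)! * ∫ l in (0 : ℝ)..1, g (x + l * c) * ((n + 1) * (1 - l) ^ n) := by
  have h := intervalIntegral.smul_integral_comp_add_mul (a := 0) (b := 1)
    (f := fun t => (x + c - t) ^ n / n ! * g t) c x
  simp only [mul_zero, add_zero, mul_one, smul_eq_mul] at h
  rw [← h, ← intervalIntegral.integral_const_mul, ← intervalIntegral.integral_const_mul]
  congr 1
  ext l
  rw [Nat.factorial_succ, show x + c - (x + c * l) = c * (1 - l) by ring, mul_pow, mul_comm l c]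
  push_cast
  field_simp
  ring

section SSmooth

variable {s : ℕ} {f fs : ℝ → ℝ}

theorem SSmooth.iteratedDeriv_sub_eq_integral (hsm : SSmooth s f fs) (a b : ℝ) :
    iteratedDeriv (s - 1) f b - iteratedDeriv (s - 1) f a = ∫ t in a..b, fs t := by
  rcases le_total a b with hab | hba
  · exact hsm.2.1 a b hab
  · rw [intervalIntegral.integral_symm, ← hsm.2.1 b a hba, neg_sub]

theorem SSmooth.contDiff (hsm : SSmooth s f fs) : ContDiff ℝ (s - 1) f := by
  refine contDiff_iff_iteratedDeriv.2 ⟨fun m hm => ?_, fun m hm => hsm.1 m (by exact_mod_cast hm)⟩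
  rcases (show m ≤ s - 1 by exact_mod_cast hm).lt_or_eq with hm | rfl
  · exact (hsm.1 m hm).continuous
  · have hprim : iteratedDeriv (s - 1) f =
        fun y => iteratedDeriv (s - 1) f 0 + ∫ t in (0 : ℝ)..y, fs t :=
      funext fun y => by linarith [hsm.iteratedDeriv_sub_eq_integral 0 y]
    rw [hprim]
    exact continuous_const.add <|
      intervalIntegral.continuous_primitive (fun _ _ => hsm.2.2.intervalIntegrable) 0

theorem SSmooth.taylor_integral_remainder (hs : 1 ≤ s) (hsm : SSmooth s f fs) (x c : ℝ) :
    f (x + c) = ∑ k ∈ range s, iteratedDeriv k f x * c ^ k / k ! +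
      c ^ s / s ! * ∫ l in (0 : ℝ)..1, fs (x + l * c) * (s * (1 - l) ^ (s - 1)) := by
  obtain ⟨n, rfl⟩ : ∃ n, s = n + 1 := ⟨s - 1, by omega⟩
  rw [taylor_integral_remainder_of_iteratedDeriv_sub_eq_integral hsm.contDiff
    hsm.2.2.locallyIntegrable hsm.iteratedDeriv_sub_eq_integral x (x + c), add_sub_cancel_left,
    Nat.add_sub_cancel, integral_sub_pow_mul_eq_unitInterval]
  push_cast
  rfl

end SSmooth

theorem conv_Sker_eq_integral (f K : ℝ → ℝ) {h : ℝ} (hh : 0 < h) (x : ℝ) :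
    conv f (Sker h K) x = ∫ t, K t * f (x - h * t) := by
  have hscale := Measure.integral_comp_mul_left (fun y => Sker h K y * f (x - y)) h
  rw [abs_of_pos (inv_pos.2 hh), smul_eq_mul] at hscale
  calc conv f (Sker h K) x = h * ∫ t, Sker h K (h * t) * f (x - h * t) := by
        rw [hscale, mul_inv_cancel_left₀ hh.ne']; rfl
    _ = ∫ t, K t * f (x - h * t) := by
        rw [← integral_const_mul]
        congr 1 with t
        simp only [Sker, mul_div_cancel_left₀ t hh.ne']
        field_simp

theorem ae_integrable_mul_comp_sub_mul {f K : ℝ → ℝ} (hf : Integrable f) (hK : Integrable K)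
    {h : ℝ} (hh : h ≠ 0) : ∀ᵐ x, Integrable fun t => K t * f (x - h * t) := by
  filter_upwards [(hK.comp_div hh).ae_convolution_exists (L := ContinuousLinearMap.mul ℝ ℝ) hf]
    with x hx
  simpa only [mul_div_cancel_left₀ _ hh, ContinuousLinearMap.mul_apply'] using
    (hx : Integrable (fun y => K (y / h) * f (x - y)) volume).comp_mul_left' hh

theorem integrable_pow_mul_of_le {K : ℝ → ℝ} {s j : ℕ} (hK : Integrable K)
    (hKs : Integrable fun t => |t| ^ s * |K t|) (hj : j ≤ s) :
    Integrable fun t => t ^ j * K t := by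
  refine (hK.abs.add hKs).mono' ((continuous_pow j).aestronglyMeasurable.mul hK.1)
    (Eventually.of_forall fun t => ?_)
  have hpow : |t| ^ j ≤ 1 + |t| ^ s := by
    rcases le_total |t| 1 with ht | ht
    · linarith [pow_le_one₀ (n := j) (abs_nonneg t) ht, pow_nonneg (abs_nonneg t) s]
    · linarith [pow_le_pow_right₀ ht hj]
  rw [Real.norm_eq_abs, abs_mul, abs_pow, Pi.add_apply]
  nlinarith [abs_nonneg (K t)]

theorem IsKernel.integral_sum_mul_pow_mul {K : ℝ → ℝ} {s : ℕ} (hK : IsKernel K) (hs : 1 ≤ s)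
    (hmom : ∀ j, 1 ≤ j → j < s → alphaM j K = 0)
    (hint : ∀ j < s, Integrable fun t => t ^ j * K t) (a : ℕ → ℝ) :
    ∫ t, (∑ j ∈ range s, a j * t ^ j) * K t = a 0 := by
  simp_rw [Finset.sum_mul, mul_assoc]
  rw [integral_finsetSum _ fun j hj => (hint j (mem_range.1 hj)).const_mul (a j),
    Finset.sum_eq_single_of_mem 0 (mem_range.2 hs)]
  · simp [integral_const_mul, hK.2]
  · intro j hj hj0
    rw [integral_const_mul, ← alphaM, hmom j (Nat.one_le_iff_ne_zero.2 hj0) (mem_range.1 hj),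
      mul_zero]

/-- equation (210): the integral representation of the bias of the
smoothed density, for a kernel whose moments of orders `1, …, s−1` vanish. -/
theorem bias_integral_representation
    (s : ℕ) (hs : 1 ≤ s) (hh : ℝ) (hhpos : 0 < hh)
    (K : ℝ → ℝ) (hK : IsKernel K)
    (hmom : ∀ j, 1 ≤ j → j < s → alphaM j K = 0)
    (hbeta : Integrable (fun t => |t| ^ (s : ℝ) * |K t|))
    (f fs : ℝ → ℝ) (hf : Integrable f) (hsm : SSmooth s f fs) :
    ∀ᵐ x : ℝ,
      conv f (Sker hh K) x - f x =
        (-hh) ^ s / (Nat.factorial s : ℝ) *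
          ∫ t, (∫ l in (0 : ℝ)..1, fs (x - hh * l * t) * (s * (1 - l) ^ (s - 1))) *
            (t ^ s * K t) := by
  have hmoment : ∀ j ≤ s, Integrable fun t => t ^ j * K t := fun j hj =>
    integrable_pow_mul_of_le hK.1 (by simpa only [Real.rpow_natCast] using hbeta) hj
  filter_upwards [ae_integrable_mul_comp_sub_mul hf hK.1 hhpos.ne'] with x hx
  set a : ℕ → ℝ := fun j => iteratedDeriv j f x * (-hh) ^ j / (j ! : ℝ)
  have hpoly : Integrable fun t => (∑ j ∈ range s, a j * t ^ j) * K t := by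
    simp_rw [Finset.sum_mul, mul_assoc]
    exact integrable_finsetSum _ fun j hj => (hmoment j (mem_range.1 hj).le).const_mul (a j)
  have htaylor : ∀ t, K t * f (x - hh * t) - (∑ j ∈ range s, a j * t ^ j) * K t =
      (-hh) ^ s / s ! * ((∫ l in (0 : ℝ)..1, fs (x - hh * l * t) * (s * (1 - l) ^ (s - 1))) *
        (t ^ s * K t)) := by
    intro t
    have hl : ∀ l : ℝ, x + l * (-hh * t) = x - hh * l * t := fun l => by ring
    rw [sub_eq_iff_eq_add', show x - hh * t = x + -hh * t by ring,
      hsm.taylor_integral_remainder hs x (-hh * t), mul_add, Finset.mul_sum, Finset.sum_mul]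
    simp only [hl]
    congr 1
    · exact Finset.sum_congr rfl fun j _ => by simp only [a]; ring
    · ring
  calc conv f (Sker hh K) x - f x
      = (∫ t, K t * f (x - hh * t)) - ∫ t, (∑ j ∈ range s, a j * t ^ j) * K t := by
        rw [conv_Sker_eq_integral f K hhpos, hK.integral_sum_mul_pow_mul hs hmom
          (fun j hj => hmoment j hj.le)]
        simp [a]
    _ = _ := by rw [← integral_sub hx hpoly, ← integral_const_mul]; simp_rw [htaylor]
end

section
/- Let s ≥ 1 be an integer, a ∈ (0,1], δ > 1. Let g : ℝ → ℝ be bounded (with ‖g‖_C = sup_x |g(x)| < ∞) and suppose there exist positive functions l, r : ℝ → (0,∞) with |g(x − u) − g(x)| ≤ l(x)|u|^a whenever |u| ≤ r(x), for all x ∈ ℝ. Let K : ℝ → ℝ be integrable with β_{s+a}(K) < ∞ and β_{s+δ}(K) < ∞. Then for every x ∈ ℝ, λ ∈ (0,1], and h > 0: ∫ |g(x − hλt) − g(x)| · |t^s K(t)| dt ≤ h^a · β_{s+a}(K) · l(x) + 2‖g‖_C · (λ^δ h^δ / r(x)^δ) · β_{s+δ}(K). -/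
open MeasureTheory Filter

/-- bound on `𝓘(x)` in the proof of Theorem 3: for a bounded function
with a local Lipschitz bound, `∫ |g(x−hλt) − g(x)| |t^s K(t)| dt` is controlled by
`h^a β_{s+a}(K) l(x) + 2‖g‖_C (λ^δ h^δ / r(x)^δ) β_{s+δ}(K)`. -/
theorem integral_increment_bound
    (s : ℕ) (hs : 1 ≤ s) (a δ : ℝ) (ha0 : 0 < a) (ha1 : a ≤ 1) (hδ : 1 < δ)
    (g : ℝ → ℝ) (hgBdd : BddAbove (Set.range fun x => |g x|))
    (l r : ℝ → ℝ) (hl : ∀ x, 0 < l x) (hr : ∀ x, 0 < r x)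
    (hlip : ∀ x u : ℝ, |u| ≤ r x → |g (x - u) - g x| ≤ l x * |u| ^ a)
    (K : ℝ → ℝ) (hKint : Integrable K)
    (hba : Integrable (fun t => |t| ^ ((s : ℝ) + a) * |K t|))
    (hbδ : Integrable (fun t => |t| ^ ((s : ℝ) + δ) * |K t|))
    (x lam hh : ℝ) (hlam0 : 0 < lam) (hlam1 : lam ≤ 1) (hh0 : 0 < hh) :
    (∫ t, |g (x - hh * lam * t) - g x| * |t ^ s * K t|) ≤
      hh ^ a * betaM ((s : ℝ) + a) K * l x +
        2 * (⨆ y, |g y|) * (lam ^ δ * hh ^ δ / r x ^ δ) * betaM ((s : ℝ) + δ) K := by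
  set M := ⨆ y, |g y| with hM
  have hgM : ∀ y, |g y| ≤ M := fun y => le_ciSup hgBdd y
  have hM0 : 0 ≤ M := le_trans (abs_nonneg _) (hgM 0)
  have hgub : ∀ u : ℝ, |g (x - u) - g x| ≤ 2 * M := by
    intro u
    calc |g (x - u) - g x| ≤ |g (x - u)| + |g x| := abs_sub _ _
    _ ≤ M + M := add_le_add (hgM _) (hgM _)
    _ = 2 * M := by ring
  set c1 := hh ^ a * l x with hc1def
  set c2 := 2 * M * (lam ^ δ * hh ^ δ / r x ^ δ) with hc2def
  have hc1 : 0 ≤ c1 := mul_nonneg (Real.rpow_nonneg hh0.le a) (hl x).le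
  have hc2 : 0 ≤ c2 := by
    apply mul_nonneg (by linarith)
    apply div_nonneg (mul_nonneg (Real.rpow_nonneg hlam0.le δ) (Real.rpow_nonneg hh0.le δ))
      (Real.rpow_nonneg (hr x).le δ)
  have hBint : Integrable (fun t => c1 * (|t| ^ ((s : ℝ) + a) * |K t|)
      + c2 * (|t| ^ ((s : ℝ) + δ) * |K t|)) := (hba.const_mul c1).add (hbδ.const_mul c2)
  have hpt : ∀ t : ℝ, |g (x - hh * lam * t) - g x| * |t ^ s * K t| ≤
      c1 * (|t| ^ ((s : ℝ) + a) * |K t|) + c2 * (|t| ^ ((s : ℝ) + δ) * |K t|) := by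
    intro t
    have habs : |t ^ s * K t| = |t| ^ ((s : ℝ)) * |K t| := by
      rw [abs_mul, abs_pow, Real.rpow_natCast]
    rw [habs]
    have htnn : (0:ℝ) ≤ |t| := abs_nonneg t
    rcases le_or_gt (|hh * lam * t|) (r x) with hcase | hcase
    · -- Lipschitz case
      have h1 : |g (x - hh * lam * t) - g x| ≤ l x * |hh * lam * t| ^ a := hlip x _ hcase
      have h2 : |hh * lam * t| ^ a ≤ hh ^ a * |t| ^ a := by
        rw [abs_mul, Real.mul_rpow (abs_nonneg _) htnn]
        apply mul_le_mul_of_nonneg_right _ (Real.rpow_nonneg htnn a)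
        apply Real.rpow_le_rpow (abs_nonneg _) _ ha0.le
        rw [abs_of_pos (mul_pos hh0 hlam0)]
        nlinarith
      have h3 : |g (x - hh * lam * t) - g x| ≤ c1 * |t| ^ a := by
        calc |g (x - hh * lam * t) - g x| ≤ l x * (hh ^ a * |t| ^ a) :=
          h1.trans (mul_le_mul_of_nonneg_left h2 (hl x).le)
        _ = c1 * |t| ^ a := by rw [hc1def]; ring
      have h4 : |t| ^ a * |t| ^ ((s : ℝ)) = |t| ^ ((s : ℝ) + a) := by
        rw [Real.rpow_add' htnn (by positivity : (s:ℝ) + a ≠ 0), mul_comm]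
      have : |g (x - hh * lam * t) - g x| * (|t| ^ ((s : ℝ)) * |K t|) ≤
          c1 * (|t| ^ ((s : ℝ) + a) * |K t|) := by
        calc |g (x - hh * lam * t) - g x| * (|t| ^ ((s : ℝ)) * |K t|)
            ≤ c1 * |t| ^ a * (|t| ^ ((s : ℝ)) * |K t|) :=
          mul_le_mul_of_nonneg_right h3 (mul_nonneg (Real.rpow_nonneg htnn _) (abs_nonneg _))
        _ = c1 * (|t| ^ a * |t| ^ ((s : ℝ)) * |K t|) := by ring
        _ = c1 * (|t| ^ ((s : ℝ) + a) * |K t|) := by rw [h4]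
      refine this.trans (le_add_of_nonneg_right ?_)
      exact mul_nonneg hc2 (mul_nonneg (Real.rpow_nonneg htnn _) (abs_nonneg _))
    · -- far case
      have hrx := hr x
      have hq : 1 ≤ (|hh * lam * t| / r x) ^ δ := by
        apply Real.one_le_rpow _ (by linarith)
        rw [le_div_iff₀ hrx]; linarith
      have habst : |hh * lam * t| = hh * lam * |t| := by
        rw [abs_mul, abs_of_pos (mul_pos hh0 hlam0)]
      have hkey : (|hh * lam * t| / r x) ^ δ * |t| ^ ((s : ℝ)) =
          (lam ^ δ * hh ^ δ / r x ^ δ) * |t| ^ ((s : ℝ) + δ) := by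
        rw [habst, Real.div_rpow (by positivity) hrx.le,
          Real.mul_rpow (by positivity) htnn, Real.mul_rpow hh0.le hlam0.le,
          Real.rpow_add' htnn (by positivity : (s:ℝ) + δ ≠ 0)]
        ring
      calc |g (x - hh * lam * t) - g x| * (|t| ^ ((s : ℝ)) * |K t|)
          ≤ 2 * M * (|t| ^ ((s : ℝ)) * |K t|) := by
            exact mul_le_mul_of_nonneg_right (hgub _)
              (mul_nonneg (Real.rpow_nonneg htnn _) (abs_nonneg _))
      _ ≤ 2 * M * ((|hh * lam * t| / r x) ^ δ * (|t| ^ ((s : ℝ)) * |K t|)) := by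
        apply mul_le_mul_of_nonneg_left _ (by linarith : (0:ℝ) ≤ 2 * M)
        nlinarith [mul_nonneg (Real.rpow_nonneg htnn (s:ℝ)) (abs_nonneg (K t))]
      _ = c2 * (|t| ^ ((s : ℝ) + δ) * |K t|) := by
        rw [hc2def]
        linear_combination (2 * M * |K t|) * hkey
      _ ≤ c1 * (|t| ^ ((s : ℝ) + a) * |K t|) + c2 * (|t| ^ ((s : ℝ) + δ) * |K t|) := by
        apply le_add_of_nonneg_left
        exact mul_nonneg hc1 (mul_nonneg (Real.rpow_nonneg htnn _) (abs_nonneg _))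
  calc (∫ t, |g (x - hh * lam * t) - g x| * |t ^ s * K t|) ≤
      ∫ t, (c1 * (|t| ^ ((s : ℝ) + a) * |K t|) + c2 * (|t| ^ ((s : ℝ) + δ) * |K t|)) := by
        apply integral_mono_of_nonneg
        · exact ae_of_all _ fun t => mul_nonneg (abs_nonneg _) (abs_nonneg _)
        · exact hBint
        · exact ae_of_all _ hpt
  _ = c1 * betaM ((s : ℝ) + a) K + c2 * betaM ((s : ℝ) + δ) K := by
    rw [integral_add (hba.const_mul c1) (hbδ.const_mul c2)]
    simp only [MeasureTheory.integral_const_mul]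
    rfl
  _ = hh ^ a * betaM ((s : ℝ) + a) K * l x +
      2 * M * (lam ^ δ * hh ^ δ / r x ^ δ) * betaM ((s : ℝ) + δ) K := by
    rw [hc1def, hc2def]; ring
  _ = hh ^ a * betaM ((s : ℝ) + a) K * l x +
      2 * (⨆ y, |g y|) * (lam ^ δ * hh ^ δ / r x ^ δ) * betaM ((s : ℝ) + δ) K := by rw [hM]
end
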